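/- Let a be a positive integer and consider the a-Switch gadget. Let (f^1, f^2) be a 2-commodity flow on it with exempt set {s_1, t_2, e_L, e_R, o_B, o_T}, and assume f^1(s_1 → v_1) = a, f^2(v_6 → t_2) = a, and f^1(e_L → v_2) = f^1(e_R → v_3) = 0. Then: (1) if f^2(e_L → v_2) = a and f^2(e_R → v_3) = 0, then f^1(v_5 → o_T) = a, f^2(v_5 → o_T) = 0, and f^1(v_4 → o_B) = f^2(v_4 → o_B) = 0; and (2) if f^2(e_L → v_2) = 0 and f^2(e_R → v_3) = a, then f^1(v_4 → o_B) = a, f^2(v_4 → o_B) = 0, and f^1(v_5 → o_T) = f^2(v_5 → o_T) = 0. -/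
import Mathlib


/-- Vertices of the `a`-Switch gadget: `0,…,5 = v₁,…,v₆`, `6 = s₁`, `7 = t₂`,
`8 = e_L`, `9 = e_R`, `10 = o_B`, `11 = o_T`. -/
abbrev SwitchV := Fin 12

/-- Arc capacities of the `a`-Switch gadget: all listed arcs have capacity `a`
(capacity `0` means no arc). -/
def switchCap (a : ℕ) (u v : SwitchV) : ℕ :=
  if (u, v) ∈ ([(8, 1), (9, 2), (6, 0), (0, 1), (0, 2), (1, 3), (2, 4),
      (3, 5), (4, 5), (5, 7), (3, 10), (4, 11)] : List (SwitchV × SwitchV))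
  then a else 0

/-- A 2-commodity flow on a capacitated directed graph, with flow conservation
required at every vertex outside the exempt set `T`. -/
def IsTwoFlow {V : Type*} [Fintype V] (cap : V → V → ℕ) (T : Set V)
    (f1 f2 : V → V → ℕ) : Prop :=
  (∀ u v, f1 u v + f2 u v ≤ cap u v) ∧
  (∀ q, q ∉ T → (∑ u, f1 u q) = (∑ u, f1 q u)) ∧
  (∀ q, q ∉ T → (∑ u, f2 u q) = (∑ u, f2 q u))

lemma sum12_expand (g : Fin 12 → ℕ) :
    ∑ u, g u = g 0 + g 1 + g 2 + g 3 + g 4 + g 5 + g 6 + g 7 + g 8 + g 9 + g 10 + g 11 := by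
  simp [Fin.sum_univ_succ]
  norm_num [Fin.succ, Fin.add_def]
  simp only [← add_assoc]

/-- Lemma 3.12 (functionality of the `a`-Switch gadget). -/
theorem switch_gadget_flow (a : ℕ) (ha : 0 < a)
    (f1 f2 : SwitchV → SwitchV → ℕ)
    (hf : IsTwoFlow (switchCap a) ({6, 7, 8, 9, 10, 11} : Set SwitchV) f1 f2)
    (hs : f1 6 0 = a) (ht : f2 5 7 = a)
    (he1 : f1 8 1 = 0) (he2 : f1 9 2 = 0) :
    ((f2 8 1 = a ∧ f2 9 2 = 0) →
      (f1 4 11 = a ∧ f2 4 11 = 0 ∧ f1 3 10 = 0 ∧ f2 3 10 = 0)) ∧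
    ((f2 8 1 = 0 ∧ f2 9 2 = a) →
      (f1 3 10 = a ∧ f2 3 10 = 0 ∧ f1 4 11 = 0 ∧ f2 4 11 = 0)) := by
  obtain ⟨hc, h1, h2⟩ := hf
  have hz : ∀ u v : SwitchV, (u, v) ∉ ([(8, 1), (9, 2), (6, 0), (0, 1), (0, 2), (1, 3), (2, 4), (3, 5), (4, 5), (5, 7), (3, 10), (4, 11)] : List (SwitchV × SwitchV)) → f1 u v = 0 ∧ f2 u v = 0 := by
    intro u v h
    have := hc u v
    simp [switchCap, h] at this
    omega
  obtain ⟨hz1_0_0, hz2_0_0⟩ := hz 0 0 (by decide)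
  obtain ⟨hz1_0_3, hz2_0_3⟩ := hz 0 3 (by decide)
  obtain ⟨hz1_0_4, hz2_0_4⟩ := hz 0 4 (by decide)
  obtain ⟨hz1_0_5, hz2_0_5⟩ := hz 0 5 (by decide)
  obtain ⟨hz1_0_6, hz2_0_6⟩ := hz 0 6 (by decide)
  obtain ⟨hz1_0_7, hz2_0_7⟩ := hz 0 7 (by decide)
  obtain ⟨hz1_0_8, hz2_0_8⟩ := hz 0 8 (by decide)
  obtain ⟨hz1_0_9, hz2_0_9⟩ := hz 0 9 (by decide)
  obtain ⟨hz1_0_10, hz2_0_10⟩ := hz 0 10 (by decide)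
  obtain ⟨hz1_0_11, hz2_0_11⟩ := hz 0 11 (by decide)
  obtain ⟨hz1_1_0, hz2_1_0⟩ := hz 1 0 (by decide)
  obtain ⟨hz1_1_1, hz2_1_1⟩ := hz 1 1 (by decide)
  obtain ⟨hz1_1_2, hz2_1_2⟩ := hz 1 2 (by decide)
  obtain ⟨hz1_1_4, hz2_1_4⟩ := hz 1 4 (by decide)
  obtain ⟨hz1_1_5, hz2_1_5⟩ := hz 1 5 (by decide)
  obtain ⟨hz1_1_6, hz2_1_6⟩ := hz 1 6 (by decide)
  obtain ⟨hz1_1_7, hz2_1_7⟩ := hz 1 7 (by decide)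
  obtain ⟨hz1_1_8, hz2_1_8⟩ := hz 1 8 (by decide)
  obtain ⟨hz1_1_9, hz2_1_9⟩ := hz 1 9 (by decide)
  obtain ⟨hz1_1_10, hz2_1_10⟩ := hz 1 10 (by decide)
  obtain ⟨hz1_1_11, hz2_1_11⟩ := hz 1 11 (by decide)
  obtain ⟨hz1_2_0, hz2_2_0⟩ := hz 2 0 (by decide)
  obtain ⟨hz1_2_1, hz2_2_1⟩ := hz 2 1 (by decide)
  obtain ⟨hz1_2_2, hz2_2_2⟩ := hz 2 2 (by decide)
  obtain ⟨hz1_2_3, hz2_2_3⟩ := hz 2 3 (by decide)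
  obtain ⟨hz1_2_5, hz2_2_5⟩ := hz 2 5 (by decide)
  obtain ⟨hz1_2_6, hz2_2_6⟩ := hz 2 6 (by decide)
  obtain ⟨hz1_2_7, hz2_2_7⟩ := hz 2 7 (by decide)
  obtain ⟨hz1_2_8, hz2_2_8⟩ := hz 2 8 (by decide)
  obtain ⟨hz1_2_9, hz2_2_9⟩ := hz 2 9 (by decide)
  obtain ⟨hz1_2_10, hz2_2_10⟩ := hz 2 10 (by decide)
  obtain ⟨hz1_2_11, hz2_2_11⟩ := hz 2 11 (by decide)
  obtain ⟨hz1_3_0, hz2_3_0⟩ := hz 3 0 (by decide)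
  obtain ⟨hz1_3_1, hz2_3_1⟩ := hz 3 1 (by decide)
  obtain ⟨hz1_3_2, hz2_3_2⟩ := hz 3 2 (by decide)
  obtain ⟨hz1_3_3, hz2_3_3⟩ := hz 3 3 (by decide)
  obtain ⟨hz1_3_4, hz2_3_4⟩ := hz 3 4 (by decide)
  obtain ⟨hz1_3_6, hz2_3_6⟩ := hz 3 6 (by decide)
  obtain ⟨hz1_3_7, hz2_3_7⟩ := hz 3 7 (by decide)
  obtain ⟨hz1_3_8, hz2_3_8⟩ := hz 3 8 (by decide)
  obtain ⟨hz1_3_9, hz2_3_9⟩ := hz 3 9 (by decide)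
  obtain ⟨hz1_3_11, hz2_3_11⟩ := hz 3 11 (by decide)
  obtain ⟨hz1_4_0, hz2_4_0⟩ := hz 4 0 (by decide)
  obtain ⟨hz1_4_1, hz2_4_1⟩ := hz 4 1 (by decide)
  obtain ⟨hz1_4_2, hz2_4_2⟩ := hz 4 2 (by decide)
  obtain ⟨hz1_4_3, hz2_4_3⟩ := hz 4 3 (by decide)
  obtain ⟨hz1_4_4, hz2_4_4⟩ := hz 4 4 (by decide)
  obtain ⟨hz1_4_6, hz2_4_6⟩ := hz 4 6 (by decide)
  obtain ⟨hz1_4_7, hz2_4_7⟩ := hz 4 7 (by decide)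
  obtain ⟨hz1_4_8, hz2_4_8⟩ := hz 4 8 (by decide)
  obtain ⟨hz1_4_9, hz2_4_9⟩ := hz 4 9 (by decide)
  obtain ⟨hz1_4_10, hz2_4_10⟩ := hz 4 10 (by decide)
  obtain ⟨hz1_5_0, hz2_5_0⟩ := hz 5 0 (by decide)
  obtain ⟨hz1_5_1, hz2_5_1⟩ := hz 5 1 (by decide)
  obtain ⟨hz1_5_2, hz2_5_2⟩ := hz 5 2 (by decide)
  obtain ⟨hz1_5_3, hz2_5_3⟩ := hz 5 3 (by decide)
  obtain ⟨hz1_5_4, hz2_5_4⟩ := hz 5 4 (by decide)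
  obtain ⟨hz1_5_5, hz2_5_5⟩ := hz 5 5 (by decide)
  obtain ⟨hz1_5_6, hz2_5_6⟩ := hz 5 6 (by decide)
  obtain ⟨hz1_5_8, hz2_5_8⟩ := hz 5 8 (by decide)
  obtain ⟨hz1_5_9, hz2_5_9⟩ := hz 5 9 (by decide)
  obtain ⟨hz1_5_10, hz2_5_10⟩ := hz 5 10 (by decide)
  obtain ⟨hz1_5_11, hz2_5_11⟩ := hz 5 11 (by decide)
  obtain ⟨hz1_6_1, hz2_6_1⟩ := hz 6 1 (by decide)
  obtain ⟨hz1_6_2, hz2_6_2⟩ := hz 6 2 (by decide)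
  obtain ⟨hz1_6_3, hz2_6_3⟩ := hz 6 3 (by decide)
  obtain ⟨hz1_6_4, hz2_6_4⟩ := hz 6 4 (by decide)
  obtain ⟨hz1_6_5, hz2_6_5⟩ := hz 6 5 (by decide)
  obtain ⟨hz1_7_0, hz2_7_0⟩ := hz 7 0 (by decide)
  obtain ⟨hz1_7_1, hz2_7_1⟩ := hz 7 1 (by decide)
  obtain ⟨hz1_7_2, hz2_7_2⟩ := hz 7 2 (by decide)
  obtain ⟨hz1_7_3, hz2_7_3⟩ := hz 7 3 (by decide)
  obtain ⟨hz1_7_4, hz2_7_4⟩ := hz 7 4 (by decide)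
  obtain ⟨hz1_7_5, hz2_7_5⟩ := hz 7 5 (by decide)
  obtain ⟨hz1_8_0, hz2_8_0⟩ := hz 8 0 (by decide)
  obtain ⟨hz1_8_2, hz2_8_2⟩ := hz 8 2 (by decide)
  obtain ⟨hz1_8_3, hz2_8_3⟩ := hz 8 3 (by decide)
  obtain ⟨hz1_8_4, hz2_8_4⟩ := hz 8 4 (by decide)
  obtain ⟨hz1_8_5, hz2_8_5⟩ := hz 8 5 (by decide)
  obtain ⟨hz1_9_0, hz2_9_0⟩ := hz 9 0 (by decide)
  obtain ⟨hz1_9_1, hz2_9_1⟩ := hz 9 1 (by decide)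
  obtain ⟨hz1_9_3, hz2_9_3⟩ := hz 9 3 (by decide)
  obtain ⟨hz1_9_4, hz2_9_4⟩ := hz 9 4 (by decide)
  obtain ⟨hz1_9_5, hz2_9_5⟩ := hz 9 5 (by decide)
  obtain ⟨hz1_10_0, hz2_10_0⟩ := hz 10 0 (by decide)
  obtain ⟨hz1_10_1, hz2_10_1⟩ := hz 10 1 (by decide)
  obtain ⟨hz1_10_2, hz2_10_2⟩ := hz 10 2 (by decide)
  obtain ⟨hz1_10_3, hz2_10_3⟩ := hz 10 3 (by decide)
  obtain ⟨hz1_10_4, hz2_10_4⟩ := hz 10 4 (by decide)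
  obtain ⟨hz1_10_5, hz2_10_5⟩ := hz 10 5 (by decide)
  obtain ⟨hz1_11_0, hz2_11_0⟩ := hz 11 0 (by decide)
  obtain ⟨hz1_11_1, hz2_11_1⟩ := hz 11 1 (by decide)
  obtain ⟨hz1_11_2, hz2_11_2⟩ := hz 11 2 (by decide)
  obtain ⟨hz1_11_3, hz2_11_3⟩ := hz 11 3 (by decide)
  obtain ⟨hz1_11_4, hz2_11_4⟩ := hz 11 4 (by decide)
  obtain ⟨hz1_11_5, hz2_11_5⟩ := hz 11 5 (by decide)
  have hb_8_1 : f1 8 1 + f2 8 1 ≤ a := by have := hc 8 1; simpa [switchCap] using this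
  have hb_9_2 : f1 9 2 + f2 9 2 ≤ a := by have := hc 9 2; simpa [switchCap] using this
  have hb_6_0 : f1 6 0 + f2 6 0 ≤ a := by have := hc 6 0; simpa [switchCap] using this
  have hb_0_1 : f1 0 1 + f2 0 1 ≤ a := by have := hc 0 1; simpa [switchCap] using this
  have hb_0_2 : f1 0 2 + f2 0 2 ≤ a := by have := hc 0 2; simpa [switchCap] using this
  have hb_1_3 : f1 1 3 + f2 1 3 ≤ a := by have := hc 1 3; simpa [switchCap] using this
  have hb_2_4 : f1 2 4 + f2 2 4 ≤ a := by have := hc 2 4; simpa [switchCap] using this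
  have hb_3_5 : f1 3 5 + f2 3 5 ≤ a := by have := hc 3 5; simpa [switchCap] using this
  have hb_4_5 : f1 4 5 + f2 4 5 ≤ a := by have := hc 4 5; simpa [switchCap] using this
  have hb_5_7 : f1 5 7 + f2 5 7 ≤ a := by have := hc 5 7; simpa [switchCap] using this
  have hb_3_10 : f1 3 10 + f2 3 10 ≤ a := by have := hc 3 10; simpa [switchCap] using this
  have hb_4_11 : f1 4 11 + f2 4 11 ≤ a := by have := hc 4 11; simpa [switchCap] using this
  have he1_0 := h1 0 (by decide)
  rw [sum12_expand (fun u => f1 u 0), sum12_expand (fun u => f1 0 u)] at he1_0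
  simp only [hz1_0_0, hz1_0_10, hz1_0_11, hz1_0_3, hz1_0_4, hz1_0_5, hz1_0_6, hz1_0_7, hz1_0_8, hz1_0_9, hz1_10_0, hz1_11_0, hz1_1_0, hz1_2_0, hz1_3_0, hz1_4_0, hz1_5_0, hz1_7_0, hz1_8_0, hz1_9_0, add_zero, zero_add] at he1_0
  have he2_0 := h2 0 (by decide)
  rw [sum12_expand (fun u => f2 u 0), sum12_expand (fun u => f2 0 u)] at he2_0
  simp only [hz2_0_0, hz2_0_10, hz2_0_11, hz2_0_3, hz2_0_4, hz2_0_5, hz2_0_6, hz2_0_7, hz2_0_8, hz2_0_9, hz2_10_0, hz2_11_0, hz2_1_0, hz2_2_0, hz2_3_0, hz2_4_0, hz2_5_0, hz2_7_0, hz2_8_0, hz2_9_0, add_zero, zero_add] at he2_0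
  have he1_1 := h1 1 (by decide)
  rw [sum12_expand (fun u => f1 u 1), sum12_expand (fun u => f1 1 u)] at he1_1
  simp only [hz1_10_1, hz1_11_1, hz1_1_0, hz1_1_1, hz1_1_10, hz1_1_11, hz1_1_2, hz1_1_4, hz1_1_5, hz1_1_6, hz1_1_7, hz1_1_8, hz1_1_9, hz1_2_1, hz1_3_1, hz1_4_1, hz1_5_1, hz1_6_1, hz1_7_1, hz1_9_1, add_zero, zero_add] at he1_1
  have he2_1 := h2 1 (by decide)
  rw [sum12_expand (fun u => f2 u 1), sum12_expand (fun u => f2 1 u)] at he2_1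
  simp only [hz2_10_1, hz2_11_1, hz2_1_0, hz2_1_1, hz2_1_10, hz2_1_11, hz2_1_2, hz2_1_4, hz2_1_5, hz2_1_6, hz2_1_7, hz2_1_8, hz2_1_9, hz2_2_1, hz2_3_1, hz2_4_1, hz2_5_1, hz2_6_1, hz2_7_1, hz2_9_1, add_zero, zero_add] at he2_1
  have he1_2 := h1 2 (by decide)
  rw [sum12_expand (fun u => f1 u 2), sum12_expand (fun u => f1 2 u)] at he1_2
  simp only [hz1_10_2, hz1_11_2, hz1_1_2, hz1_2_0, hz1_2_1, hz1_2_10, hz1_2_11, hz1_2_2, hz1_2_3, hz1_2_5, hz1_2_6, hz1_2_7, hz1_2_8, hz1_2_9, hz1_3_2, hz1_4_2, hz1_5_2, hz1_6_2, hz1_7_2, hz1_8_2, add_zero, zero_add] at he1_2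
  have he2_2 := h2 2 (by decide)
  rw [sum12_expand (fun u => f2 u 2), sum12_expand (fun u => f2 2 u)] at he2_2
  simp only [hz2_10_2, hz2_11_2, hz2_1_2, hz2_2_0, hz2_2_1, hz2_2_10, hz2_2_11, hz2_2_2, hz2_2_3, hz2_2_5, hz2_2_6, hz2_2_7, hz2_2_8, hz2_2_9, hz2_3_2, hz2_4_2, hz2_5_2, hz2_6_2, hz2_7_2, hz2_8_2, add_zero, zero_add] at he2_2
  have he1_3 := h1 3 (by decide)
  rw [sum12_expand (fun u => f1 u 3), sum12_expand (fun u => f1 3 u)] at he1_3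
  simp only [hz1_0_3, hz1_10_3, hz1_11_3, hz1_2_3, hz1_3_0, hz1_3_1, hz1_3_11, hz1_3_2, hz1_3_3, hz1_3_4, hz1_3_6, hz1_3_7, hz1_3_8, hz1_3_9, hz1_4_3, hz1_5_3, hz1_6_3, hz1_7_3, hz1_8_3, hz1_9_3, add_zero, zero_add] at he1_3
  have he2_3 := h2 3 (by decide)
  rw [sum12_expand (fun u => f2 u 3), sum12_expand (fun u => f2 3 u)] at he2_3
  simp only [hz2_0_3, hz2_10_3, hz2_11_3, hz2_2_3, hz2_3_0, hz2_3_1, hz2_3_11, hz2_3_2, hz2_3_3, hz2_3_4, hz2_3_6, hz2_3_7, hz2_3_8, hz2_3_9, hz2_4_3, hz2_5_3, hz2_6_3, hz2_7_3, hz2_8_3, hz2_9_3, add_zero, zero_add] at he2_3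
  have he1_4 := h1 4 (by decide)
  rw [sum12_expand (fun u => f1 u 4), sum12_expand (fun u => f1 4 u)] at he1_4
  simp only [hz1_0_4, hz1_10_4, hz1_11_4, hz1_1_4, hz1_3_4, hz1_4_0, hz1_4_1, hz1_4_10, hz1_4_2, hz1_4_3, hz1_4_4, hz1_4_6, hz1_4_7, hz1_4_8, hz1_4_9, hz1_5_4, hz1_6_4, hz1_7_4, hz1_8_4, hz1_9_4, add_zero, zero_add] at he1_4
  have he2_4 := h2 4 (by decide)
  rw [sum12_expand (fun u => f2 u 4), sum12_expand (fun u => f2 4 u)] at he2_4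
  simp only [hz2_0_4, hz2_10_4, hz2_11_4, hz2_1_4, hz2_3_4, hz2_4_0, hz2_4_1, hz2_4_10, hz2_4_2, hz2_4_3, hz2_4_4, hz2_4_6, hz2_4_7, hz2_4_8, hz2_4_9, hz2_5_4, hz2_6_4, hz2_7_4, hz2_8_4, hz2_9_4, add_zero, zero_add] at he2_4
  have he1_5 := h1 5 (by decide)
  rw [sum12_expand (fun u => f1 u 5), sum12_expand (fun u => f1 5 u)] at he1_5
  simp only [hz1_0_5, hz1_10_5, hz1_11_5, hz1_1_5, hz1_2_5, hz1_5_0, hz1_5_1, hz1_5_10, hz1_5_11, hz1_5_2, hz1_5_3, hz1_5_4, hz1_5_5, hz1_5_6, hz1_5_8, hz1_5_9, hz1_6_5, hz1_7_5, hz1_8_5, hz1_9_5, add_zero, zero_add] at he1_5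
  have he2_5 := h2 5 (by decide)
  rw [sum12_expand (fun u => f2 u 5), sum12_expand (fun u => f2 5 u)] at he2_5
  simp only [hz2_0_5, hz2_10_5, hz2_11_5, hz2_1_5, hz2_2_5, hz2_5_0, hz2_5_1, hz2_5_10, hz2_5_11, hz2_5_2, hz2_5_3, hz2_5_4, hz2_5_5, hz2_5_6, hz2_5_8, hz2_5_9, hz2_6_5, hz2_7_5, hz2_8_5, hz2_9_5, add_zero, zero_add] at he2_5
  refine ⟨fun ⟨hA, hB⟩ => ⟨?_, ?_, ?_, ?_⟩, fun ⟨hA, hB⟩ => ⟨?_, ?_, ?_, ?_⟩⟩ <;> omega
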